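/- arXiv:2501.02897 — 8 statements merged into one kernel-verified Lean document; each statement's English description precedes it below -/
import Mathlib

section
/- Let R be an associative ring with identity, let P(x), L(x), Q(x) be polynomials in R[x] (where the variable x commutes with the coefficients and a polynomial Σ aᵢxⁱ is evaluated at d ∈ R as Σ aᵢdⁱ) with P(x) = L(x)·Q(x). Let d ∈ R be such that the element h := Q(d) is invertible (a unit) in R. Then P(d) = L(h·d·h⁻¹)·Q(d). -/
open Polynomial

theorem Polynomial.eval_mul_of_semiconjBy {R : Type*} [Ring R] (L : R[X]) {Q : R[X]} {d e : R}
    (H : SemiconjBy (Q.eval d) d e) : (L * Q).eval d = L.eval e * Q.eval d := by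
  induction L using Polynomial.induction_on' with
  | add p q hp hq => rw [add_mul, eval_add, eval_add, hp, hq, add_mul]
  | monomial n a =>
    have hmul : monomial n a * Q = C a * (Q * X ^ n) := by
      rw [← C_mul_X_pow_eq_monomial, mul_assoc, X_pow_mul]
    rw [hmul, eval_C_mul, eval_mul_X_pow, (H.pow_right n).eq, eval_monomial, mul_assoc]

/-- Lemma 1 (first part): if `P = L * Q` in `R[x]` and `h := Q(d)` is invertible,
then `P(d) = L(h d h⁻¹) Q(d)`. -/
theorem stmt_0 {R : Type*} [Ring R] (L Q P : Polynomial R) (hP : P = L * Q)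
    (d : R) (h : Rˣ) (hh : (h : R) = Q.eval d) :
    P.eval d = L.eval ((h : R) * d * ((h⁻¹ : Rˣ) : R)) * Q.eval d := by
  subst hP
  exact L.eval_mul_of_semiconjBy (hh ▸ h.mk_semiconjBy d)
end

section
/- Let R be an associative ring with identity, let L(x), Q(x) ∈ R[x] and set P(x) = L(x)·Q(x). Let d ∈ R be such that h := Q(d) is invertible in R. If h·d·h⁻¹ is a root of L(x) (i.e. L(h·d·h⁻¹) = 0), then d is a root of P(x) (i.e. P(d) = 0). -/
open Polynomial

/-- Each monomial `a Xⁿ` of `L` contributes `a * Q(d) * dⁿ = a * (u d u⁻¹)ⁿ * u`. -/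
theorem Polynomial.eval_mul_eq_eval_units_conj_mul {R : Type*} [Ring R] (L Q : R[X]) (d : R)
    (u : Rˣ) (hu : (u : R) = Q.eval d) :
    (L * Q).eval d = L.eval ((u : R) * d * ((u⁻¹ : Rˣ) : R)) * u := by
  induction L using Polynomial.induction_on' with
  | add p q hp hq => rw [add_mul, eval_add, eval_add, hp, hq, add_mul]
  | monomial n a =>
    rw [← C_mul_X_pow_eq_monomial, mul_assoc, X_pow_mul, ← mul_assoc, eval_mul_X_pow,
      eval_C_mul, eval_C_mul, eval_X_pow, Units.conj_pow, ← hu]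
    simp only [mul_assoc, Units.inv_mul, mul_one]

/-- Lemma 1 (second part): if `P = L * Q` in `R[x]`, `h := Q(d)` is invertible and
`h d h⁻¹` is a root of `L`, then `d` is a root of `P`. -/
theorem stmt_1 {R : Type*} [Ring R] (L Q P : Polynomial R) (hP : P = L * Q)
    (d : R) (h : Rˣ) (hh : (h : R) = Q.eval d)
    (hroot : L.eval ((h : R) * d * ((h⁻¹ : Rˣ) : R)) = 0) :
    P.eval d = 0 := by
  rw [hP, eval_mul_eq_eval_units_conj_mul L Q d h hh, hroot, zero_mul]
end

section
/- Let D be an associative division ring. Then for any elements x₁, …, x_n ∈ D (not necessarily distinct) there exists a polynomial F(x) ∈ D[x] of degree n such that F(xᵢ) = 0 for every i = 1, …, n. -/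
/-!
Induct on `n`. Since coefficients stand to the left of `X`, multiplying on the left by a linear
factor evaluates as `((X - c) * G)(a) = G(a) * a - c * G(a)`: every root of `G` stays a root, and a
new point `a` becomes one by taking `c = G(a) * a * G(a)⁻¹`, the conjugate of `a` by `G(a)`.
-/

open Polynomial

namespace Polynomial

theorem eval_X_sub_C_mul {R : Type*} [Ring R] (p : R[X]) (c a : R) :
    ((X - C c) * p).eval a = p.eval a * a - c * p.eval a := by
  rw [sub_mul, eval_sub, X_mul, eval_mul_X, eval_C_mul]

theorem eval_X_sub_C_mul_eq_zero {R : Type*} [Ring R] {p : R[X]} {a : R} (h : p.eval a = 0)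
    (c : R) : ((X - C c) * p).eval a = 0 := by
  rw [eval_X_sub_C_mul, h, zero_mul, mul_zero, sub_zero]

theorem eval_X_sub_C_conj_mul_self {D : Type*} [DivisionRing D] (p : D[X]) (a : D) :
    ((X - C (p.eval a * a * (p.eval a)⁻¹)) * p).eval a = 0 := by
  rw [eval_X_sub_C_mul]
  by_cases h : p.eval a = 0
  · simp [h]
  · rw [mul_assoc, mul_assoc, inv_mul_cancel₀ h, mul_one, sub_self]

theorem degree_X_sub_C_mul {R : Type*} [Ring R] [Nontrivial R] (p : R[X]) (c : R) :
    ((X - C c) * p).degree = p.degree + 1 := by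
  rw [(monic_X_sub_C c).degree_mul_comm, (monic_X_sub_C c).degree_mul, degree_X_sub_C]

end Polynomial

/-- Theorem 2: over a division ring `D`, for any `n` elements `x 0, …, x (n-1)` there is a
polynomial `F ∈ D[x]` of degree `n` having all of them as roots. -/
theorem stmt_3 {D : Type*} [DivisionRing D] (n : ℕ) (x : Fin n → D) :
    ∃ F : Polynomial D, F.degree = n ∧ ∀ i, F.eval (x i) = 0 := by
  induction n with
  | zero => exact ⟨1, degree_one, fun i => i.elim0⟩
  | succ n ih =>
    obtain ⟨G, hG, hroots⟩ := ih (Fin.tail x)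
    refine ⟨(X - C (G.eval (x 0) * x 0 * (G.eval (x 0))⁻¹)) * G, ?_, ?_⟩
    · rw [degree_X_sub_C_mul, hG]
      norm_cast
    · exact Fin.cases (eval_X_sub_C_conj_mul_self G (x 0))
        fun i => eval_X_sub_C_mul_eq_zero (hroots i) _
end

section
/- Let R be an associative ring with identity, let n ≥ 2, and let x₁ ≠ x₂ be elements of R. If for some k with 1 ≤ k ≤ n−1 the element x₁ᵏ − x₂ᵏ is invertible in R, then there exist a₀, a₁, …, a_{n−1} ∈ R such that both x₁ and x₂ are roots of the polynomial xⁿ + a_{n−1}x^{n−1} + ⋯ + a₁x + a₀, i.e. xᵢⁿ + a_{n−1}xᵢ^{n−1} + ⋯ + a₁xᵢ + a₀ = 0 for i = 1, 2. -/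
/-!
Only the coefficients of `x ^ k` and `x ^ 0` are needed: for a trinomial `xⁿ + b xᵏ + c`,
having both `x₁` and `x₂` as roots amounts to `b (x₁ᵏ - x₂ᵏ) = x₂ⁿ - x₁ⁿ` together with
`c = -x₁ⁿ - b x₁ᵏ`, and the first equation is solved by multiplying on the right by the inverse
of `x₁ᵏ - x₂ᵏ`.
-/

open Finset

theorem exists_pow_add_mul_pow_add_eq_zero {R : Type*} [Ring R] {x y : R} {k : ℕ}
    (hu : IsUnit (x ^ k - y ^ k)) (n : ℕ) :
    ∃ b c : R, x ^ n + b * x ^ k + c = 0 ∧ y ^ n + b * y ^ k + c = 0 := by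
  set b := (y ^ n - x ^ n) * ↑hu.unit⁻¹
  have hb : b * (x ^ k - y ^ k) = y ^ n - x ^ n := by
    rw [mul_assoc, hu.val_inv_mul, mul_one]
  refine ⟨b, -x ^ n - b * x ^ k, by abel, ?_⟩
  calc y ^ n + b * y ^ k + (-x ^ n - b * x ^ k)
      = (y ^ n - x ^ n) - b * (x ^ k - y ^ k) := by rw [mul_sub]; abel
    _ = 0 := by rw [hb, sub_self]

theorem sum_range_single_add_single_mul_pow {R : Type*} [Semiring R] (x b c : R) {k n : ℕ}
    (hk : k < n) :
    ∑ i ∈ range n, (Pi.single 0 c + Pi.single k b : ℕ → R) i * x ^ i = c + b * x ^ k := by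
  simp [add_mul, sum_add_distrib, Pi.single_apply, ite_mul, hk, Nat.zero_lt_of_lt hk]

theorem stmt_5_general {R : Type*} [Ring R] (n : ℕ) (hn : 2 ≤ n) (x₁ x₂ : R)
    (k : ℕ) (hk2 : k ≤ n - 1) (hu : IsUnit (x₁ ^ k - x₂ ^ k)) :
    ∃ a : ℕ → R,
      (x₁ ^ n + ∑ i ∈ Finset.range n, a i * x₁ ^ i = 0) ∧
      (x₂ ^ n + ∑ i ∈ Finset.range n, a i * x₂ ^ i = 0) := by
  have hkn : k < n := by omega
  obtain ⟨b, c, h₁, h₂⟩ := exists_pow_add_mul_pow_add_eq_zero hu n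
  refine ⟨Pi.single 0 c + Pi.single k b, ?_, ?_⟩ <;>
    rwa [sum_range_single_add_single_mul_pow _ _ _ hkn, add_comm c, ← add_assoc]

/-- Theorem 3: if `x₁ ≠ x₂` and some `x₁ᵏ - x₂ᵏ` (with `1 ≤ k ≤ n-1`) is invertible, then
there is a monic equation `xⁿ + a_{n-1}x^{n-1} + ⋯ + a₁x + a₀ = 0` of degree `n` having
both `x₁` and `x₂` as solutions. -/
theorem stmt_5 {R : Type*} [Ring R] (n : ℕ) (hn : 2 ≤ n) (x₁ x₂ : R) (hx : x₁ ≠ x₂)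
    (k : ℕ) (hk1 : 1 ≤ k) (hk2 : k ≤ n - 1) (hu : IsUnit (x₁ ^ k - x₂ ^ k)) :
    ∃ a : ℕ → R,
      (x₁ ^ n + ∑ i ∈ Finset.range n, a i * x₁ ^ i = 0) ∧
      (x₂ ^ n + ∑ i ∈ Finset.range n, a i * x₂ ^ i = 0) :=
  stmt_5_general n hn x₁ x₂ k hk2 hu
end

section
/- Let F be a field and let x₁, x₂ be k × k matrices over F. There exists a polynomial of the form x² + a₁x + a₀ with k × k matrix coefficients a₀, a₁ whose roots include both x₁ and x₂ if and only if the rank of the matrix (x₁ − x₂)ᵀ equals the rank of the k × 2k matrix ((x₁ − x₂)ᵀ ∣ (x₂ᵀ)² − (x₁ᵀ)²) obtained by appending the columns of (x₂ᵀ)² − (x₁ᵀ)² to the right of the columns of (x₁ − x₂)ᵀ. -/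
/-!
Subtracting the two root equations eliminates `a₀`, so such a polynomial exists iff
`a₁ (x₁ - x₂) = x₂² - x₁²` is solvable for `a₁` (then `a₀ := -(x₁² + a₁ x₁)`). After transposing,
this is the linear system `(x₁ - x₂)ᵀ Y = (x₂ᵀ)² - (x₁ᵀ)²`, which by Rouché–Capelli is solvable iff
appending the right-hand side to the coefficient matrix does not increase the rank.
-/

open Matrix

theorem exists_monic_quadratic_roots_iff {R : Type*} [Ring R] (x₁ x₂ : R) :
    (∃ a₁ a₀ : R, x₁ ^ 2 + a₁ * x₁ + a₀ = 0 ∧ x₂ ^ 2 + a₁ * x₂ + a₀ = 0) ↔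
      ∃ a₁ : R, a₁ * (x₁ - x₂) = x₂ ^ 2 - x₁ ^ 2 := by
  constructor
  · rintro ⟨a₁, a₀, h₁, h₂⟩
    exact ⟨a₁, by linear_combination (norm := noncomm_ring) h₁ - h₂⟩
  · rintro ⟨a₁, h⟩
    exact ⟨a₁, -(x₁ ^ 2 + a₁ * x₁), by abel, by linear_combination (norm := noncomm_ring) -h⟩

namespace Matrix

variable {R : Type*} {l m n p : Type*}

theorem exists_mul_eq_iff_exists_transpose_mul_eq [CommSemiring R] [Fintype m]
    (X : Matrix m n R) (Y : Matrix l n R) :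
    (∃ a : Matrix l m R, a * X = Y) ↔ ∃ b : Matrix m l R, Xᵀ * b = Yᵀ :=
  ⟨fun ⟨a, h⟩ => ⟨aᵀ, by rw [← transpose_mul, h]⟩,
    fun ⟨b, h⟩ => ⟨bᵀ, transpose_injective (by rw [transpose_mul, transpose_transpose, h])⟩⟩

theorem range_mulVecLin_fromCols [CommSemiring R] [Fintype n] [Fintype p]
    (A : Matrix m n R) (B : Matrix m p R) :
    LinearMap.range (fromCols A B).mulVecLin =
      LinearMap.range A.mulVecLin ⊔ LinearMap.range B.mulVecLin := by
  have hcol : (fromCols A B).col = Sum.elim A.col B.col := by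
    ext (j | j) i <;> rfl
  rw [range_mulVecLin, range_mulVecLin, range_mulVecLin, hcol, Set.Sum.elim_range,
    Submodule.span_union]

theorem exists_mul_eq_iff_range_le [CommSemiring R] [Fintype n] [Fintype p] [DecidableEq p]
    (A : Matrix m n R) (B : Matrix m p R) :
    (∃ Y : Matrix n p R, A * Y = B) ↔
      LinearMap.range B.mulVecLin ≤ LinearMap.range A.mulVecLin := by
  refine ⟨?_, fun h => ?_⟩
  · rintro ⟨Y, rfl⟩
    rw [mulVecLin_mul]
    exact LinearMap.range_comp_le_range _ _
  · rw [range_mulVecLin B, Submodule.span_le] at h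
    choose y hy using fun j => h ⟨j, rfl⟩
    refine ⟨(of y)ᵀ, ext_of_mulVec_single fun j => ?_⟩
    rw [← mulVec_mulVec, mulVec_single_one, mulVec_single_one]
    exact hy j

theorem rank_eq_rank_fromCols_iff [Field R] [Finite m] [Fintype n] [Fintype p]
    (A : Matrix m n R) (B : Matrix m p R) :
    A.rank = (fromCols A B).rank ↔
      LinearMap.range B.mulVecLin ≤ LinearMap.range A.mulVecLin := by
  rw [rank, rank, range_mulVecLin_fromCols, ← sup_eq_left]
  exact ⟨fun h => (Submodule.eq_of_le_of_finrank_eq le_sup_left h).symm, fun h => by rw [h]⟩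

end Matrix

/-- Theorem 4: for `k × k` matrices `x₁, x₂` over a field, there is a polynomial
`x² + a₁x + a₀` with both as roots iff `rank (x₁ - x₂)ᵀ = rank ((x₁ - x₂)ᵀ ∣ (x₂ᵀ)² - (x₁ᵀ)²)`. -/
theorem stmt_6 {F : Type*} [Field F] (k : ℕ) (x₁ x₂ : Matrix (Fin k) (Fin k) F) :
    (∃ a₁ a₀ : Matrix (Fin k) (Fin k) F,
        x₁ ^ 2 + a₁ * x₁ + a₀ = 0 ∧ x₂ ^ 2 + a₁ * x₂ + a₀ = 0) ↔
      ((x₁ - x₂)ᵀ).rank = (Matrix.fromCols (x₁ - x₂)ᵀ ((x₂ᵀ) ^ 2 - (x₁ᵀ) ^ 2)).rank := by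
  rw [exists_monic_quadratic_roots_iff, exists_mul_eq_iff_exists_transpose_mul_eq,
    rank_eq_rank_fromCols_iff, ← exists_mul_eq_iff_range_le]
  simp only [transpose_sub, transpose_pow]
end

section
/- Let F be an infinite field and let x₁, x₂ be k × k matrices over F such that the matrix x₁ − x₂ is not invertible. If the matrix equation a₁(x₁ − x₂) = x₂² − x₁² has at least one solution a₁ ∈ Mat_k(F), then it has infinitely many solutions a₁ ∈ Mat_k(F); consequently, there are infinitely many polynomials of the form x² + a₁x + a₀ with matrix coefficients whose roots include both x₁ and x₂. -/
/-!
If `b ≠ 0` annihilates `x₁ - x₂` from the left (such `b` exists because a non-invertible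
element of the Artinian ring of matrices is a left zero divisor), then every `a₁ + c • b`
with `c ∈ F` is again a solution of `a₁ (x₁ - x₂) = x₂² - x₁²`, giving infinitely many
solutions as `F` is infinite. A pair `(a₁, a₀)` makes both `x₁` and `x₂` roots of
`x² + a₁x + a₀` exactly when `a₁` is such a solution and `a₀ = -(x₁² + a₁x₁)`.
-/

theorem IsArtinianRing.exists_ne_zero_mul_eq_zero_of_not_isUnit {R : Type*} [Ring R]
    [IsArtinianRing R] {m : R} (hm : ¬IsUnit m) : ∃ b ≠ 0, b * m = 0 := by
  by_contra! h
  refine hm (isUnit_iff_isRightRegular.mpr ?_)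
  exact (injective_iff_map_eq_zero (AddMonoidHom.mulRight m)).mpr fun b hbm =>
    by_contra fun hb => h b hb hbm

theorem Set.infinite_setOf_mul_eq_of_not_isUnit {F A : Type*} [Field F] [Infinite F] [Ring A]
    [IsArtinianRing A] [Algebra F A] {m c : A} (hm : ¬IsUnit m) (hc : ∃ a, a * m = c) :
    {a : A | a * m = c}.Infinite := by
  obtain ⟨a, ha⟩ := hc
  obtain ⟨b, hb, hbm⟩ := IsArtinianRing.exists_ne_zero_mul_eq_zero_of_not_isUnit hm
  refine Set.infinite_of_injective_forall_mem (f := fun t : F => a + t • b)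
    ((add_right_injective a).comp (smul_left_injective F hb)) fun t => ?_
  simp only [Set.mem_ofPred_eq, add_mul, smul_mul_assoc, hbm, smul_zero, add_zero, ha]

theorem setOf_quadratic_with_roots_eq_image {R : Type*} [Ring R] (x₁ x₂ : R) :
    {p : R × R | x₁ ^ 2 + p.1 * x₁ + p.2 = 0 ∧ x₂ ^ 2 + p.1 * x₂ + p.2 = 0} =
      (fun a => (a, -(x₁ ^ 2 + a * x₁))) '' {a : R | a * (x₁ - x₂) = x₂ ^ 2 - x₁ ^ 2} := by
  ext ⟨a, a₀⟩
  simp only [Set.mem_ofPred_eq, Set.mem_image, Prod.mk.injEq]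
  constructor
  · rintro ⟨h₁, h₂⟩
    obtain rfl : a₀ = -(x₁ ^ 2 + a * x₁) := eq_neg_of_add_eq_zero_right h₁
    refine ⟨a, ?_, rfl, rfl⟩
    rw [mul_sub, ← sub_eq_zero, ← neg_eq_zero, ← h₂]
    abel
  · rintro ⟨a, ha, rfl, rfl⟩
    refine ⟨by abel, ?_⟩
    rw [← neg_eq_zero, ← sub_eq_zero.mpr ha, mul_sub]
    abel

/-- Proposition 1: over an infinite field, if `x₁ - x₂` is not invertible and the equation
`a₁(x₁ - x₂) = x₂² - x₁²` has a solution, then it has infinitely many solutions, and hence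
there are infinitely many polynomials `x² + a₁x + a₀` with both `x₁` and `x₂` as roots. -/
theorem stmt_8 {F : Type*} [Field F] [Infinite F] (k : ℕ)
    (x₁ x₂ : Matrix (Fin k) (Fin k) F) (hninv : ¬ IsUnit (x₁ - x₂))
    (hsol : ∃ a₁ : Matrix (Fin k) (Fin k) F, a₁ * (x₁ - x₂) = x₂ ^ 2 - x₁ ^ 2) :
    {a₁ : Matrix (Fin k) (Fin k) F | a₁ * (x₁ - x₂) = x₂ ^ 2 - x₁ ^ 2}.Infinite ∧
    {p : Matrix (Fin k) (Fin k) F × Matrix (Fin k) (Fin k) F |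
        x₁ ^ 2 + p.1 * x₁ + p.2 = 0 ∧ x₂ ^ 2 + p.1 * x₂ + p.2 = 0}.Infinite := by
  have hinf := Set.infinite_setOf_mul_eq_of_not_isUnit (F := F) hninv hsol
  refine ⟨hinf, ?_⟩
  rw [setOf_quadratic_with_roots_eq_image]
  exact hinf.image fun a _ b _ hab => congrArg Prod.fst hab
end

section
/- Let R be an associative ring with identity and let x₁, x₂ ∈ R be such that x₁ − x₂ is invertible in R. Then there exist unique elements a₁, a₀ ∈ R such that both x₁ and x₂ are roots of the polynomial x² + a₁x + a₀; namely a₁ = (x₂² − x₁²)(x₁ − x₂)⁻¹ and a₀ = −x₁² − a₁x₁. -/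
/-! Subtracting the two equations eliminates `a₀` and leaves `a₁ (x₁ - x₂) = x₂² - x₁²`, which
determines `a₁` because `x₁ - x₂` is a unit; the first equation then determines `a₀`. -/

theorem quadratic_eq_zero_at_both_iff {R : Type*} [Ring R] (x₁ x₂ a₁ a₀ : R) :
    (x₁ ^ 2 + a₁ * x₁ + a₀ = 0 ∧ x₂ ^ 2 + a₁ * x₂ + a₀ = 0) ↔
      (a₁ * (x₁ - x₂) = x₂ ^ 2 - x₁ ^ 2 ∧ a₀ = -x₁ ^ 2 - a₁ * x₁) := by
  have first_iff : x₁ ^ 2 + a₁ * x₁ + a₀ = 0 ↔ a₀ = -x₁ ^ 2 - a₁ * x₁ := by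
    rw [add_eq_zero_iff_neg_eq, neg_add', eq_comm]
  rw [first_iff, and_comm, and_congr_left_iff]
  rintro rfl
  constructor <;> intro h <;> linear_combination (norm := noncomm_ring) -h

/-- If `x₁ - x₂` is invertible then there are unique `a₁, a₀` such that `x₁` and `x₂` are
both roots of `x² + a₁x + a₀`, namely `a₁ = (x₂² - x₁²)(x₁ - x₂)⁻¹` and
`a₀ = -x₁² - a₁x₁`. -/
theorem stmt_11 {R : Type*} [Ring R] (x₁ x₂ : R) (u : Rˣ) (hu : (u : R) = x₁ - x₂) :
    ∀ a₁ a₀ : R,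
      (x₁ ^ 2 + a₁ * x₁ + a₀ = 0 ∧ x₂ ^ 2 + a₁ * x₂ + a₀ = 0) ↔
        (a₁ = (x₂ ^ 2 - x₁ ^ 2) * ((u⁻¹ : Rˣ) : R) ∧ a₀ = -x₁ ^ 2 - a₁ * x₁) := by
  intro a₁ a₀
  rw [quadratic_eq_zero_at_both_iff, ← hu, Units.eq_mul_inv_iff_mul_eq]
end

section
/- Let x₁ and x₂ be the complex 2 × 2 matrices x₁ = [[0, 0], [1, −1]] and x₂ = [[0, 0], [0, 1]]. Then there exist no complex 2 × 2 matrices a₀, a₁ such that both x₁ and x₂ are roots of the polynomial x² + a₁x + a₀. -/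
/-!
Subtracting the two root equations eliminates `a₀` and leaves `a₁ (x₁ - x₂) = x₂² - x₁²`.
Hence every vector killed by `x₁ - x₂` is killed by `x₁² - x₂²`; the vector `(2, 1)` spans
the kernel of `x₁ - x₂ = [[0, 0], [1, -2]]` but is not killed by `x₁² - x₂² = [[0, 0], [-1, 0]]`.
-/

open Matrix

theorem mul_sub_eq_sq_sub_sq_of_isRoot {R : Type*} [Ring R] {a₁ a₀ d₁ d₂ : R}
    (h₁ : d₁ ^ 2 + a₁ * d₁ + a₀ = 0) (h₂ : d₂ ^ 2 + a₁ * d₂ + a₀ = 0) :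
    a₁ * (d₁ - d₂) = d₂ ^ 2 - d₁ ^ 2 :=
  calc a₁ * (d₁ - d₂)
      = (d₁ ^ 2 + a₁ * d₁ + a₀) - (d₂ ^ 2 + a₁ * d₂ + a₀) + (d₂ ^ 2 - d₁ ^ 2) := by noncomm_ring
    _ = d₂ ^ 2 - d₁ ^ 2 := by rw [h₁, h₂, sub_zero, zero_add]

theorem Matrix.not_exists_common_monic_quadratic_of_mulVec {n R : Type*} [Fintype n]
    [DecidableEq n] [Ring R] {d₁ d₂ : Matrix n n R} {v : n → R}
    (hker : (d₁ - d₂) *ᵥ v = 0) (hv : (d₁ ^ 2 - d₂ ^ 2) *ᵥ v ≠ 0) :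
    ¬ ∃ a₁ a₀ : Matrix n n R,
      d₁ ^ 2 + a₁ * d₁ + a₀ = 0 ∧ d₂ ^ 2 + a₁ * d₂ + a₀ = 0 := by
  rintro ⟨a₁, a₀, h₁, h₂⟩
  have hsq : d₁ ^ 2 - d₂ ^ 2 = -(a₁ * (d₁ - d₂)) := by
    rw [mul_sub_eq_sq_sub_sq_of_isRoot h₁ h₂, neg_sub]
  apply hv
  rw [hsq, neg_mulVec, ← mulVec_mulVec, hker, mulVec_zero, neg_zero]

/-- Example 3 (first part): for `x₁ = [[0,0],[1,-1]]` and `x₂ = [[0,0],[0,1]]` over `ℂ`,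
there is no polynomial `x² + a₁x + a₀` having both as roots. -/
theorem stmt_14 :
    ¬ ∃ a₁ a₀ : Matrix (Fin 2) (Fin 2) ℂ,
        (!![0, 0; 1, -1] : Matrix (Fin 2) (Fin 2) ℂ) ^ 2 +
          a₁ * (!![0, 0; 1, -1] : Matrix (Fin 2) (Fin 2) ℂ) + a₀ = 0 ∧
        (!![0, 0; 0, 1] : Matrix (Fin 2) (Fin 2) ℂ) ^ 2 +
          a₁ * (!![0, 0; 0, 1] : Matrix (Fin 2) (Fin 2) ℂ) + a₀ = 0 := by
  apply not_exists_common_monic_quadratic_of_mulVec (v := ![2, 1])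
  · ext i
    fin_cases i <;> norm_num [mulVec, dotProduct, Fin.sum_univ_two]
  · intro h
    have h1 := congrFun h 1
    simp [mulVec, dotProduct, Fin.sum_univ_two, sq] at h1
end
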